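/- Let M³ be a totally geodesic hypersurface of an oriented (pseudo-)Riemannian 4-manifold (N,g) whose anti-self-dual Weyl tensor W⁻ vanishes. Then the self-dual Weyl tensor W⁺ of N vanishes at every point of M; i.e., the full Weyl tensor of N vanishes along M. -/
import Mathlib

open Matrix

/-- An oriented orthonormal frame `(X,Y,Z,W)` of the 4-dimensional (pseudo-)euclidean
space (orthonormal coordinates at a point of the manifold `N`). -/
def IsOrientedONFrame (X Y Z W : Fin 4 → ℝ) : Prop :=
  X ⬝ᵥ X = 1 ∧ Y ⬝ᵥ Y = 1 ∧ Z ⬝ᵥ Z = 1 ∧ W ⬝ᵥ W = 1 ∧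
  X ⬝ᵥ Y = 0 ∧ X ⬝ᵥ Z = 0 ∧ X ⬝ᵥ W = 0 ∧ Y ⬝ᵥ Z = 0 ∧ Y ⬝ᵥ W = 0 ∧ Z ⬝ᵥ W = 0 ∧
  (Matrix.of ![X, Y, Z, W]).det = 1

/- STATEMENT 10: Let `M³` be a totally geodesic hypersurface of an oriented
(pseudo-)Riemannian 4-manifold `N` with `W⁻ ≡ 0` (self-dual). Then `W⁺`, hence
the full Weyl tensor of `N`, vanishes at every point of `M`.

Pointwise formulation at a point `x ∈ M` in orthonormal coordinates `T_xN = ℝ⁴`: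
`R X Y Z T = ⟨R(X,Y)Z,T⟩` is the curvature 4-tensor, `ν` the unit normal of `M`,
`hGauss` encodes (via the Gauss–Codazzi equations) that `M` is totally geodesic:
`R(X,Y)Z` is tangent to `M` for `X,Y,Z` tangent; `W⁺`, `W⁻` are determined by
`4⟨W^±(X,Y)Z,X⟩ = ⟨R(X,Y)Z,X⟩ + ⟨R(Z,W)Y,W⟩ ± ⟨R(X,Y)Y,W⟩ ± ⟨R(Z,W)Z,X⟩`
on oriented orthonormal frames `(X,Y,Z,W)`, and these components determine them.
The conclusion is the vanishing of all components of `W⁺` along `M`. -/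
theorem stmt_10
    (R : (Fin 4 → ℝ) → (Fin 4 → ℝ) → (Fin 4 → ℝ) → (Fin 4 → ℝ) → ℝ)
    (ν : Fin 4 → ℝ) (hν : ν ⬝ᵥ ν = 1)
    (hpair : ∀ X Y Z T, R X Y Z T = R Z T X Y)
    (hGauss : ∀ X Y Z, X ⬝ᵥ ν = 0 → Y ⬝ᵥ ν = 0 → Z ⬝ᵥ ν = 0 → R X Y Z ν = 0)
    (Wp Wm : (Fin 4 → ℝ) → (Fin 4 → ℝ) → (Fin 4 → ℝ) → (Fin 4 → ℝ) → ℝ)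
    (hWp : ∀ X Y Z W, IsOrientedONFrame X Y Z W →
      Wp X Y Z X = (1 / 4) * (R X Y Z X + R Z W Y W + R X Y Y W + R Z W Z X))
    (hWm : ∀ X Y Z W, IsOrientedONFrame X Y Z W →
      Wm X Y Z X = (1 / 4) * (R X Y Z X + R Z W Y W - R X Y Y W - R Z W Z X))
    (hSD : ∀ X Y Z T, Wm X Y Z T = 0) :
    ∀ X Y Z, IsOrientedONFrame X Y Z ν → Wp X Y Z X = 0 := by
  intro X Y Z hF
  obtain ⟨hX, hY, hZ, hW, hXY, hXZ, hXν, hYZ, hYν, hZν, hdet⟩ := hF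
  have h1 := hWp X Y Z ν ⟨hX, hY, hZ, hW, hXY, hXZ, hXν, hYZ, hYν, hZν, hdet⟩
  have h2 := hWm X Y Z ν ⟨hX, hY, hZ, hW, hXY, hXZ, hXν, hYZ, hYν, hZν, hdet⟩
  have g1 : R X Y Y ν = 0 := hGauss X Y Y hXν hYν hYν
  have g2 : R Z ν Z X = 0 := by rw [hpair]; exact hGauss Z X Z hZν hXν hZν
  have h3 := hSD X Y Z X
  rw [h2] at h3
  linarith
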